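/- Let K and L be finite lattice-convex subsets of ℤ² whose affine hulls are all of ℝ², and suppose g_K = g_L. Then for every u ∈ ℤ² \ {0} there exists L' ∈ [L] (i.e., L' is a translate of L or of −L) such that F(K,u) = F(L',u) and F(K,−u) = F(L',−u). -/

import Mathlib

open scoped Pointwise ENNReal

noncomputable section

abbrev Z2 : Type := ℤ × ℤ
abbrev R2 : Type := ℝ × ℝ

/-- The canonical embedding of `ℤ²` into `ℝ²`. -/
def toR (p : Z2) : R2 := ((p.1 : ℝ), (p.2 : ℝ))

/-- The standard scalar product on `ℝ²`. -/
def dotR (x y : R2) : ℝ := x.1 * y.1 + x.2 * y.2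

/-- The covariogram of a set `K ⊆ ℤ²`: `u ↦ |K ∩ (K + u)|`. -/
def cov (K : Set Z2) (u : Z2) : ℕ := (K ∩ ((fun x => x + u) '' K)).ncard

/-- `K ⊆ ℤ²` is lattice-convex if it is the intersection of `ℤ²` with a convex set. -/
def latticeConvex (K : Set Z2) : Prop := ∃ C : Set R2, Convex ℝ C ∧ K = toR ⁻¹' C

/-- The affine hull of `K` is all of `ℝ²`. -/
def spans (K : Set Z2) : Prop := affineSpan ℝ (toR '' K) = ⊤

/-- `L ∈ [K]`: `L` is a translate of `K` or a translate of `−K`. -/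
def sameClass (K L : Set Z2) : Prop :=
  ∃ t : Z2, L = (fun x => x + t) '' K ∨ L = (fun x => t - x) '' K

/-- The support set `F(K,u)` of `K` in direction `u ∈ ℝ²`. -/
def suppSet (K : Set Z2) (u : R2) : Set Z2 :=
  {x ∈ K | ∀ y ∈ K, dotR (toR y) u ≤ dotR (toR x) u}

/-- A vector of `ℤ²` is primitive if the gcd of its coordinates is `1`. -/
def primitive (u : Z2) : Prop := Int.gcd u.1 u.2 = 1

/-- `u ≠ 0` is an outer normal of an edge of `K` if `F(K,u)` has more than one point. -/
def isEdge (K : Set Z2) (u : Z2) : Prop := u ≠ 0 ∧ 1 < (suppSet K (toR u)).ncard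

/-- `U(K)`: primitive outer normals of edges of `K`. -/
def normals (K : Set Z2) : Set Z2 := {u | primitive u ∧ isEdge K u}

/-- `−K`. -/
def negSet (K : Set Z2) : Set Z2 := (fun x => -x) '' K

/-- `m'(K) = min {|F(K,u)| : u ∈ U(K)}` (with `min ∅ = ∞`). -/
def mOne (K : Set Z2) : ℝ≥0∞ := ⨅ u ∈ normals K, ((suppSet K (toR u)).ncard : ℝ≥0∞)

/-- `m''(K) = min {|F(K,u)| − |F(K,−u)| + 1 : u ≠ 0, |F(K,u)| > |F(K,−u)| > 1}`. -/
def mTwo (K : Set Z2) : ℝ≥0∞ :=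
  ⨅ u ∈ {u : Z2 | u ≠ 0 ∧ 1 < (suppSet K (toR (-u))).ncard ∧
      (suppSet K (toR (-u))).ncard < (suppSet K (toR u)).ncard},
    (((suppSet K (toR u)).ncard - (suppSet K (toR (-u))).ncard + 1 : ℕ) : ℝ≥0∞)

/-- `m(K) = min {m'(K), m''(K)}`. -/
def mm (K : Set Z2) : ℝ≥0∞ := min (mOne K) (mTwo K)

/-- Determinant of the 2×2 matrix with columns `u`, `v`. -/
def detZ (u v : Z2) : ℤ := u.1 * v.2 - u.2 * v.1

/-- `D(U) = {|det(u₁,u₂)| : u₁, u₂ ∈ U} \ {0}`. -/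
def Dset (U : Set Z2) : Set ℝ≥0∞ :=
  {d | d ≠ 0 ∧ ∃ u ∈ U, ∃ v ∈ U, d = ((detZ u v).natAbs : ℝ≥0∞)}

/-- The discrepancy `δ(U) = max D(U) / min D(U)`. -/
def disc (U : Set Z2) : ℝ≥0∞ := sSup (Dset U) / sInf (Dset U)

/-- `δ(K) = δ(U(K))`. -/
def discK (K : Set Z2) : ℝ≥0∞ := disc (normals K)

/-- Two vectors of `ℝ²` are parallel (linearly dependent). -/
def Parallel2 (x w : R2) : Prop := x.1 * w.2 = x.2 * w.1

/-- Two vectors of `ℤ²` are parallel (linearly dependent). -/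
def ParallelZ (u v : Z2) : Prop := u.1 * v.2 = u.2 * v.1

/-- A polyhedron in `ℝ²`: an intersection of finitely many closed halfplanes. -/
def IsPolyhedron (P : Set R2) : Prop :=
  ∃ H : Finset (R2 × ℝ), P = ⋂ h ∈ H, {x : R2 | dotR x h.1 ≤ h.2}

/-- `E` is an edge (one-dimensional face) of the polyhedron `P`:
a convex extreme subset of `P` with at least two points that is contained in a line. -/
def IsPolyEdge (P E : Set R2) : Prop :=
  IsExtreme ℝ P E ∧ Convex ℝ E ∧ (∃ p ∈ E, ∃ q ∈ E, p ≠ q) ∧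
    ∃ a d : R2, ∀ x ∈ E, ∃ t : ℝ, x = a + t • d

/-- Every edge of `P` is parallel to some vector of `W`. -/
def edgesParallelTo (P : Set R2) (W : Set Z2) : Prop :=
  ∀ E : Set R2, IsPolyEdge P E → ∃ w ∈ W, ∀ p ∈ E, ∀ q ∈ E, Parallel2 (p - q) (toR w)

/-- `u` is parallel to an edge of the convex hull of `K`. -/
def parEdgeHull (K : Set Z2) (u : Z2) : Prop :=
  ∃ E : Set R2, IsPolyEdge (convexHull ℝ (toR '' K)) E ∧
    ∀ p ∈ E, ∀ q ∈ E, Parallel2 (p - q) (toR u)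

/-- The conical hull of a set in `ℝ²`. -/
def coneHull (s : Set R2) : Set R2 :=
  {x | ∃ c : ℝ, 0 ≤ c ∧ ∃ y ∈ convexHull ℝ s, x = c • y}

/-- The supporting cone `S(K,v) = cone (K − v)`. -/
def suppCone (K : Set Z2) (v : Z2) : Set R2 :=
  coneHull ((fun x => toR x - toR v) '' K)

/-- `v` is a vertex of `K`: a support set of `K` consisting of exactly one point. -/
def isVertex (K : Set Z2) (v : Z2) : Prop := ∃ u : R2, u ≠ 0 ∧ suppSet K u = {v}

/-- A set is centrally symmetric if it is a translate of its reflection. -/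
def centSym (A : Set Z2) : Prop := ∃ t : Z2, A = (fun x => t - x) '' A

/-- The Minkowski sum of `S` and `T` is direct. -/
def directSum (S T : Set Z2) : Prop :=
  ∀ s ∈ S, ∀ s' ∈ S, ∀ t ∈ T, ∀ t' ∈ T, s + t = s' + t' → s = s' ∧ t = t'

/-- `T₁ = {0,…,k} × {0}`. -/
def T1set (k : ℤ) : Set Z2 := {p | 0 ≤ p.1 ∧ p.1 ≤ k ∧ p.2 = 0}

/-- `T₂ = {0,…,ℓ} × {1}`. -/
def T2set (l : ℤ) : Set Z2 := {p | 0 ≤ p.1 ∧ p.1 ≤ l ∧ p.2 = 1}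

/-- `T = ({0,…,k} × {0}) ∪ ({0,…,ℓ} × {1})`. -/
def Tset (k l : ℤ) : Set Z2 := T1set k ∪ T2set l

def wOne (k : ℤ) : Z2 := (-k - 1, 1)
def wTwo (l : ℤ) : Z2 := (l + 1, 1)

/-- The lattice `𝕃 = ℤw₁ + ℤw₂`. -/
def ZLat (k l : ℤ) : Set Z2 := {p | ∃ a b : ℤ, p = a • wOne k + b • wTwo l}

/-- `S` is lattice-convex with respect to the lattice `Λ`. -/
def latticeConvexIn (Λ S : Set Z2) : Prop := ∃ C : Set R2, Convex ℝ C ∧ S = Λ ∩ toR ⁻¹' C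

/-- The translate `s + A`. -/
def transl (s : Z2) (A : Set Z2) : Set Z2 := (fun x => s + x) '' A

/-- The horizontal section `I_h` of `K` at height `h`. -/
def sect (K : Set Z2) (h : ℤ) : Set Z2 := {p ∈ K | p.2 = h}

/-- `𝒯(h)`: the members of `𝒯₁ ∪ 𝒯₂` contained in `I_h`. -/
def TcalSet (k l : ℤ) (S : Set Z2) (h : ℤ) : Set (Set Z2) :=
  {J | (∃ s ∈ S, J = transl s (T1set k) ∨ J = transl s (T2set l)) ∧ J ⊆ sect (S + Tset k l) h}

/-- `J` strictly precedes `J'` in the left-to-right order. -/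
def precedes (J J' : Set Z2) : Prop := ∀ p ∈ J, ∀ q ∈ J', p.1 < q.1

/-- Adjacency in the graph `G_S`. -/
def adjStep (k l : ℤ) (S : Set Z2) (a b : Z2) : Prop :=
  a ∈ S ∧ b ∈ S ∧
    (b - a = wOne k ∨ b - a = -(wOne k) ∨ b - a = wTwo l ∨ b - a = -(wTwo l) ∨
      (k = l + 1 ∧ (b - a = wOne k + wTwo l ∨ b - a = -(wOne k + wTwo l))))

/-- The graph `G_S` is connected. -/
def GConnected (k l : ℤ) (S : Set Z2) : Prop :=
  ∀ s ∈ S, ∀ s' ∈ S, Relation.ReflTransGen (adjStep k l S) s s'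

end

/-!
For `u ≠ 0` the faces `A = F(K, u)` and `B = F(K, -u)` of a lattice-convex `K` are lattice
segments parallel to `u⊥`, of lengths `m` and `n`. The support of `g_K` is `K - K`, whose face in
direction `u` is `A - B`, a segment of length `m + n - 1`; for `w` in it,
`K ∩ (K + w) = A ∩ (B + w)`, so `g_K` sums to `m n` over it. Thus `g_K` determines the position of
`A - B` and the unordered pair `{m, n}`, hence `(A, B)` up to a common translation or a point
reflection exchanging `A` and `B`.
-/

open scoped Pointwise

namespace Covariogram

section Face

variable {G : Type*} [AddCommGroup G] (φ : G →+ ℤ)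

def face (K : Set G) : Set G := {x ∈ K | ∀ y ∈ K, φ y ≤ φ x}

variable {φ}

lemma mem_face_neg {K : Set G} {x : G} : x ∈ face (-φ) K ↔ x ∈ K ∧ ∀ y ∈ K, φ x ≤ φ y := by
  simp [face]

lemma face_nonempty {K : Set G} (hK : K.Finite) (hne : K.Nonempty) : (face φ K).Nonempty := by
  obtain ⟨x, hx, hmax⟩ := Set.exists_max_image K φ hK hne
  exact ⟨x, hx, hmax⟩

lemma face_sub {A B : Set G} (hA : (face φ A).Nonempty) (hB : (face (-φ) B).Nonempty) :
    face φ (A - B) = face φ A - face (-φ) B := by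
  obtain ⟨a, ha, ha_max⟩ := hA
  obtain ⟨b, hb, hb_min⟩ := hB.imp fun _ => mem_face_neg.1
  ext w
  simp only [face, Set.mem_sub, Set.mem_ofPred_eq, AddMonoidHom.neg_apply, neg_le_neg_iff]
  constructor
  · rintro ⟨⟨x, hx, y, hy, rfl⟩, hmax⟩
    have := hmax (a - b) ⟨a, ha, b, hb, rfl⟩
    simp only [map_sub] at this
    have hxa := ha_max x hx
    have hby := hb_min y hy
    refine ⟨x, ⟨hx, fun z hz => ?_⟩, y, ⟨hy, fun z hz => ?_⟩, rfl⟩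
    · linarith [ha_max z hz]
    · linarith [hb_min z hz]
  · rintro ⟨x, ⟨hx, hx_max⟩, y, ⟨hy, hy_min⟩, rfl⟩
    refine ⟨⟨x, hx, y, hy, rfl⟩, ?_⟩
    rintro _ ⟨x', hx', y', hy', rfl⟩
    simp only [map_sub]
    linarith [hx_max x' hx', hy_min y' hy']

lemma inter_vadd_eq_face {A B : Set G} {w : G} (hw : w ∈ face φ A - face (-φ) B) :
    A ∩ (w +ᵥ B) = face φ A ∩ (w +ᵥ face (-φ) B) := by
  obtain ⟨x, ⟨hx, hx_max⟩, y, hy, rfl⟩ := hw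
  obtain ⟨hy, hy_min⟩ := mem_face_neg.1 hy
  ext z
  simp only [Set.mem_inter_iff, Set.mem_vadd_set, vadd_eq_add]
  constructor
  · rintro ⟨hz, b, hb, rfl⟩
    have h₁ := hx_max _ hz
    have h₂ := hy_min b hb
    simp only [map_add, map_sub] at h₁
    refine ⟨⟨hz, fun c hc => ?_⟩, b, mem_face_neg.2 ⟨hb, fun c hc => ?_⟩, rfl⟩
    · simp only [map_add, map_sub]
      linarith [hx_max c hc]
    · linarith [hy_min c hc]
  · rintro ⟨hz, b, hb, rfl⟩
    exact ⟨hz.1, b, hb.1, rfl⟩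

lemma face_image_add_const (K : Set G) (t : G) :
    face φ ((· + t) '' K) = (· + t) '' face φ K := by
  ext x
  simp only [face, Set.mem_image, Set.mem_ofPred_eq, forall_exists_index, and_imp,
    forall_apply_eq_imp_iff₂, map_add]
  constructor
  · rintro ⟨⟨y, hy, rfl⟩, hmax⟩
    exact ⟨y, ⟨hy, fun z hz => by simpa using hmax z hz⟩, rfl⟩
  · rintro ⟨y, ⟨hy, hmax⟩, rfl⟩
    exact ⟨⟨y, hy, rfl⟩, fun z hz => by simpa using hmax z hz⟩

lemma face_image_const_sub (K : Set G) (t : G) :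
    face φ ((t - ·) '' K) = (t - ·) '' face (-φ) K := by
  ext x
  simp only [face, Set.mem_image, Set.mem_ofPred_eq, forall_exists_index, and_imp,
    forall_apply_eq_imp_iff₂, map_sub, AddMonoidHom.neg_apply, neg_le_neg_iff]
  constructor
  · rintro ⟨⟨y, hy, rfl⟩, hmax⟩
    exact ⟨y, ⟨hy, fun z hz => by linarith [hmax z hz, map_sub φ t y]⟩, rfl⟩
  · rintro ⟨y, ⟨hy, hmax⟩, rfl⟩
    exact ⟨⟨y, hy, rfl⟩, fun z hz => by linarith [hmax z hz, map_sub φ t y]⟩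

end Face

lemma sum_card_inter_vadd {G : Type*} [AddCommGroup G] [DecidableEq G] (A B : Finset G) :
    ∑ w ∈ A - B, (A ∩ (w +ᵥ B)).card = A.card * B.card := by
  rw [← Finset.card_product, Finset.card_eq_sum_card_image (fun p => p.1 - p.2),
    Finset.image_sub_product]
  simp [Finset.card_inter_vadd, Finset.card_sub_eq]

lemma eq_or_swap_of_add_eq_of_mul_eq {m n m' n' : ℕ} (hs : m + n = m' + n')
    (hp : m * n = m' * n') : (m = m' ∧ n = n') ∨ (m = n' ∧ n = m') := by
  have hs' : (m : ℤ) + n = m' + n' := by exact_mod_cast hs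
  have hp' : (m : ℤ) * n = m' * n' := by exact_mod_cast hp
  have key : ((m : ℤ) - m') * ((m : ℤ) - n') = 0 := by linear_combination (m : ℤ) * hs' - hp'
  rcases mul_eq_zero.1 key with h | h
  · left; omega
  · right; omega

def dotZ (u : Z2) : Z2 →+ ℤ where
  toFun x := x.1 * u.1 + x.2 * u.2
  map_zero' := by simp
  map_add' x y := by simp only [Prod.fst_add, Prod.snd_add]; ring

lemma dotZ_apply (u x : Z2) : dotZ u x = x.1 * u.1 + x.2 * u.2 := rfl

lemma dotZ_neg (u : Z2) : dotZ (-u) = -dotZ u := by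
  ext x
  simp only [dotZ_apply, AddMonoidHom.neg_apply, Prod.fst_neg, Prod.snd_neg]
  ring

lemma suppSet_eq_face (K : Set Z2) (u : Z2) : suppSet K (toR u) = face (dotZ u) K := by
  ext x
  simp only [suppSet, face, dotR, toR, dotZ_apply, Set.mem_ofPred_eq]
  exact_mod_cast Iff.rfl

lemma exists_ker_dotZ_eq_zmultiples {u : Z2} (hu : u ≠ 0) :
    ∃ e : Z2, e ≠ 0 ∧ ∀ v, dotZ u v = 0 ↔ ∃ k : ℤ, k • e = v := by
  have hgcd : 0 < Int.gcd u.1 u.2 :=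
    Int.gcd_pos_iff.2 <| not_and_or.1 fun h => hu (Prod.ext h.1 h.2)
  obtain ⟨g, a, b, hg, hab, hu₁, hu₂⟩ := Int.exists_gcd_one' hgcd
  obtain ⟨s, t, hst⟩ := Int.isCoprime_iff_gcd_eq_one.2 hab
  refine ⟨(-b, a), fun h => ?_, fun v => ⟨fun hv => ?_, ?_⟩⟩
  · simp only [Prod.ext_iff, Prod.fst_zero, Prod.snd_zero, neg_eq_zero] at h
    simp [h.1, h.2] at hst
  · have hv' : v.1 * a + v.2 * b = 0 := by
      have : (g : ℤ) * (v.1 * a + v.2 * b) = 0 := by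
        rw [dotZ_apply, hu₁, hu₂] at hv; linear_combination hv
      exact (mul_eq_zero.1 this).resolve_left (by positivity)
    refine ⟨s * v.2 - t * v.1, Prod.ext ?_ ?_⟩
    · simp only [Prod.smul_fst, smul_eq_mul]; linear_combination -(s * hv') + v.1 * hst
    · simp only [Prod.smul_snd, smul_eq_mul]; linear_combination -(t * hv') + v.2 * hst
  · rintro ⟨k, rfl⟩
    simp only [dotZ_apply, Prod.smul_fst, Prod.smul_snd, smul_eq_mul, hu₁, hu₂]
    ring

lemma ordConnected_preimage_line {K : Set Z2} (hK : latticeConvex K) (x e : Z2) :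
    ((fun k : ℤ => x + k • e) ⁻¹' K).OrdConnected := by
  obtain ⟨C, hC, rfl⟩ := hK
  have hline : ∀ k : ℤ, toR (x + k • e) = AffineMap.lineMap (toR x) (toR (x + e)) (k : ℝ) := by
    intro k
    simp [AffineMap.lineMap_apply, toR, add_comm]
  have hpre : (fun k : ℤ => x + k • e) ⁻¹' (toR ⁻¹' C)
      = ((↑) : ℤ → ℝ) ⁻¹' (AffineMap.lineMap (toR x) (toR (x + e)) ⁻¹' C) := by
    ext k
    simp only [Set.mem_preimage, hline]
  rw [hpre]
  exact (hC.affine_preimage _).ordConnected.preimage_mono Int.cast_mono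

noncomputable def seg (p e : Z2) (m : ℕ) : Finset Z2 :=
  (Finset.Ico (0 : ℤ) m).image fun k => p + k • e

lemma mem_seg {p e x : Z2} {m : ℕ} :
    x ∈ seg p e m ↔ ∃ k : ℤ, (0 ≤ k ∧ k < m) ∧ p + k • e = x := by
  simp [seg]

lemma injective_add_zsmul (p : Z2) {e : Z2} (he : e ≠ 0) :
    Function.Injective fun k : ℤ => p + k • e :=
  fun _ _ h => smul_left_injective ℤ he (add_left_cancel h)

lemma card_seg (p : Z2) {e : Z2} (he : e ≠ 0) (m : ℕ) : (seg p e m).card = m := by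
  rw [seg, Finset.card_image_of_injective _ (injective_add_zsmul p he), Int.card_Ico, sub_zero,
    Int.toNat_natCast]

lemma seg_image_add_const (p e t : Z2) (m : ℕ) : (seg p e m).image (· + t) = seg (p + t) e m := by
  rw [seg, seg, Finset.image_image]
  congr 1
  funext k
  simp only [Function.comp_apply]
  abel

lemma seg_image_const_sub (p e t : Z2) (m : ℕ) :
    (seg p e m).image (t - ·) = seg (t - p - ((m : ℤ) - 1) • e) e m := by
  ext x
  simp only [Finset.mem_image, mem_seg]
  constructor
  · rintro ⟨_, ⟨k, hk, rfl⟩, rfl⟩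
    exact ⟨m - 1 - k, by omega, by module⟩
  · rintro ⟨k, hk, rfl⟩
    exact ⟨_, ⟨m - 1 - k, by omega, rfl⟩, by module⟩

lemma seg_sub_seg (p q e : Z2) {m n : ℕ} (hm : 0 < m) (hn : 0 < n) :
    seg p e m - seg q e n = seg (p - q - ((n : ℤ) - 1) • e) e (m + n - 1) := by
  ext w
  simp only [Finset.mem_sub, mem_seg]
  constructor
  · rintro ⟨_, ⟨i, hi, rfl⟩, _, ⟨j, hj, rfl⟩, rfl⟩
    exact ⟨i - j + (n - 1), by omega, by module⟩
  · rintro ⟨k, hk, rfl⟩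
    refine ⟨_, ⟨max 0 (k - (n - 1)), by omega, rfl⟩,
      _, ⟨max 0 (k - (n - 1)) - (k - (n - 1)), by omega, rfl⟩, by module⟩

lemma eq_of_seg_eq {p p' e : Z2} {m m' : ℕ} (he : e ≠ 0) (hm : 0 < m)
    (h : seg p e m = seg p' e m') : p = p' ∧ m = m' := by
  obtain rfl : m = m' := by rw [← card_seg p he m, h, card_seg p' he m']
  obtain ⟨i, hi, hpi⟩ := mem_seg.1 (h ▸ mem_seg.2 ⟨0, by omega, by simp⟩ : p ∈ seg p' e m)
  obtain ⟨j, hj, hpj⟩ := mem_seg.1 (h ▸ mem_seg.2 ⟨0, by omega, by simp⟩ : p' ∈ seg p e m)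
  have hij : i + j = 0 := injective_add_zsmul p' he <| show p' + (i + j) • e = p' + (0 : ℤ) • e by
    rw [zero_smul, add_zero, add_smul, ← add_assoc, hpi, hpj]
  refine ⟨?_, rfl⟩
  rw [← hpi, show i = 0 by omega, zero_smul, add_zero]

lemma exists_face_eq_seg {K : Set Z2} (hK : K.Finite) (hconv : latticeConvex K) {φ : Z2 →+ ℤ}
    {e : Z2} (he : e ≠ 0) (hker : ∀ v, φ v = 0 ↔ ∃ k : ℤ, k • e = v) (hne : (face φ K).Nonempty) :
    ∃ p m, 0 < m ∧ face φ K = seg p e m := by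
  obtain ⟨x, hxK, hx_max⟩ := hne
  set I := (fun k : ℤ => x + k • e) ⁻¹' K
  have hφe : φ e = 0 := (hker e).2 ⟨1, one_smul ℤ e⟩
  have hface : ∀ y, y ∈ face φ K ↔ ∃ k ∈ I, x + k • e = y := by
    refine fun y => ⟨fun ⟨hyK, hy_max⟩ => ?_, ?_⟩
    · obtain ⟨k, hk⟩ := (hker (y - x)).1 (by
        rw [map_sub]; exact sub_eq_zero.2 (le_antisymm (hx_max y hyK) (hy_max x hxK)))
      exact ⟨k, show x + k • e ∈ K by rwa [hk, add_sub_cancel], by rw [hk, add_sub_cancel]⟩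
    · rintro ⟨k, hk, rfl⟩
      exact ⟨hk, fun z hz => by
        rw [map_add, map_zsmul, hφe, smul_zero, add_zero]; exact hx_max z hz⟩
  have hIfin : I.Finite := hK.preimage (injective_add_zsmul x he).injOn
  obtain ⟨a, haI, ha_min⟩ := Set.exists_min_image I id hIfin ⟨0, by simpa [I] using hxK⟩
  obtain ⟨b, hbI, hb_max⟩ := Set.exists_max_image I id hIfin ⟨0, by simpa [I] using hxK⟩
  have hI : I = Set.Icc a b := Set.Subset.antisymm (fun k hk => ⟨ha_min k hk, hb_max k hk⟩)
    ((ordConnected_preimage_line hconv x e).out haI hbI)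
  refine ⟨x + a • e, (b - a + 1).toNat, by have : a ≤ b := ha_min b hbI; omega, ?_⟩
  ext y
  rw [hface, hI, Finset.mem_coe, mem_seg]
  constructor
  · rintro ⟨k, ⟨hak, hkb⟩, rfl⟩
    exact ⟨k - a, by omega, by module⟩
  · rintro ⟨i, hi, rfl⟩
    exact ⟨a + i, ⟨by omega, by omega⟩, by module⟩

lemma cov_eq_ncard_inter_vadd (K : Set Z2) (w : Z2) : cov K w = (K ∩ (w +ᵥ K)).ncard := by
  simp only [cov, ← Set.image_vadd, vadd_eq_add, add_comm w]

lemma cov_zero (K : Set Z2) : cov K 0 = K.ncard := by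
  simp [cov_eq_ncard_inter_vadd]

lemma mem_sub_iff_cov_ne_zero {K : Set Z2} (hK : K.Finite) (w : Z2) :
    w ∈ K - K ↔ cov K w ≠ 0 := by
  rw [cov_eq_ncard_inter_vadd, ← Nat.pos_iff_ne_zero,
    Set.ncard_pos (hK.subset Set.inter_subset_left)]
  constructor
  · rintro ⟨x, hx, y, hy, rfl⟩
    exact ⟨x, hx, y, hy, by simp⟩
  · rintro ⟨x, hx, y, hy, rfl⟩
    exact ⟨_, hx, y, hy, by simp⟩

lemma sub_self_eq_of_cov_eq {K L : Set Z2} (hK : K.Finite) (hL : L.Finite) (h : cov K = cov L) :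
    K - K = L - L := by
  ext w
  rw [mem_sub_iff_cov_ne_zero hK, mem_sub_iff_cov_ne_zero hL, h]

/-- For `w ∈ A - B`, `cov K w` counts the pairs of `A × B` with difference `w`. -/
lemma sum_cov_eq_card_mul_card {K : Set Z2} {φ : Z2 →+ ℤ} {A B : Finset Z2}
    (hA : face φ K = A) (hB : face (-φ) K = B) : ∑ w ∈ A - B, cov K w = A.card * B.card := by
  rw [← sum_card_inter_vadd]
  refine Finset.sum_congr rfl fun w hw => ?_
  rw [cov_eq_ncard_inter_vadd, inter_vadd_eq_face (by rw [hA, hB, ← Finset.coe_sub]; exact hw),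
    hA, hB, ← Finset.coe_vadd_finset, ← Finset.coe_inter, Set.ncard_coe_finset]

/-- The difference segment fixes `m + n` and `p - q - (n - 1) e`; with `m n` this fixes `{m, n}`. -/
lemma seg_pair_eq_of_sub_eq {p q p' q' e : Z2} {m n m' n' : ℕ} (he : e ≠ 0) (hm : 0 < m)
    (hn : 0 < n) (hm' : 0 < m') (hn' : 0 < n')
    (hsub : seg p e m - seg q e n = seg p' e m' - seg q' e n') (hmul : m * n = m' * n') :
    (∃ t, seg p e m = (seg p' e m').image (· + t) ∧ seg q e n = (seg q' e n').image (· + t)) ∨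
      ∃ t, seg p e m = (seg q' e n').image (t - ·) ∧ seg q e n = (seg p' e m').image (t - ·) := by
  rw [seg_sub_seg _ _ _ hm hn, seg_sub_seg _ _ _ hm' hn'] at hsub
  obtain ⟨hbase, hlen⟩ := eq_of_seg_eq he (by omega) hsub
  rcases eq_or_swap_of_add_eq_of_mul_eq (by omega) hmul with ⟨rfl, rfl⟩ | ⟨rfl, rfl⟩
  · refine .inl ⟨p - p', ?_, ?_⟩ <;> rw [seg_image_add_const]
    · rw [add_sub_cancel]
    · congr 1; linear_combination -hbase
  · refine .inr ⟨p + q' + ((m : ℤ) - 1) • e, ?_, ?_⟩ <;> rw [seg_image_const_sub]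
    · congr 1; abel
    · congr 1; linear_combination -hbase

lemma faces_eq_of_cov_eq {K L : Set Z2} (hK : K.Finite) (hL : L.Finite) (hKconv : latticeConvex K)
    (hLconv : latticeConvex L) (hKne : K.Nonempty) (hLne : L.Nonempty) (hcov : cov K = cov L)
    {u : Z2} (hu : u ≠ 0) :
    (∃ t, face (dotZ u) K = (· + t) '' face (dotZ u) L ∧
        face (-dotZ u) K = (· + t) '' face (-dotZ u) L) ∨
      ∃ t, face (dotZ u) K = (t - ·) '' face (-dotZ u) L ∧
        face (-dotZ u) K = (t - ·) '' face (dotZ u) L := by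
  obtain ⟨e, he, hker⟩ := exists_ker_dotZ_eq_zmultiples hu
  have hker' : ∀ v, (-dotZ u) v = 0 ↔ ∃ k : ℤ, k • e = v := by simpa using hker
  obtain ⟨pK, m, hm, hAK⟩ := exists_face_eq_seg hK hKconv he hker (face_nonempty hK hKne)
  obtain ⟨qK, n, hn, hBK⟩ := exists_face_eq_seg hK hKconv he hker' (face_nonempty hK hKne)
  obtain ⟨pL, m', hm', hAL⟩ := exists_face_eq_seg hL hLconv he hker (face_nonempty hL hLne)
  obtain ⟨qL, n', hn', hBL⟩ := exists_face_eq_seg hL hLconv he hker' (face_nonempty hL hLne)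
  have hsub : seg pK e m - seg qK e n = seg pL e m' - seg qL e n' := by
    apply Finset.coe_injective
    rw [Finset.coe_sub, Finset.coe_sub, ← hAK, ← hBK, ← hAL, ← hBL,
      ← face_sub (face_nonempty hK hKne) (face_nonempty hK hKne),
      ← face_sub (face_nonempty hL hLne) (face_nonempty hL hLne), sub_self_eq_of_cov_eq hK hL hcov]
  have hmul : m * n = m' * n' := by
    rw [← card_seg pK he m, ← card_seg qK he n, ← card_seg pL he m', ← card_seg qL he n',
      ← sum_cov_eq_card_mul_card hAK hBK, ← sum_cov_eq_card_mul_card hAL hBL, hsub, hcov]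
  rw [hAK, hBK, hAL, hBL]
  rcases seg_pair_eq_of_sub_eq he hm hn hm' hn' hsub hmul with ⟨t, hA, hB⟩ | ⟨t, hA, hB⟩
  · exact .inl ⟨t, by rw [hA, Finset.coe_image], by rw [hB, Finset.coe_image]⟩
  · exact .inr ⟨t, by rw [hA, Finset.coe_image], by rw [hB, Finset.coe_image]⟩

end Covariogram

open Covariogram

theorem edges_up_to_flips_general
    (K L : Set Z2) (hKfin : K.Finite) (hLfin : L.Finite)
    (hKconv : latticeConvex K) (hLconv : latticeConvex L)
    (hcov : cov K = cov L) :
    ∀ u : Z2, u ≠ 0 → ∃ L' : Set Z2, sameClass L L' ∧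
      suppSet K (toR u) = suppSet L' (toR u) ∧
      suppSet K (toR (-u)) = suppSet L' (toR (-u)) := by
  intro u hu
  have hcard : K.ncard = L.ncard := by rw [← cov_zero, hcov, cov_zero]
  rcases K.eq_empty_or_nonempty with rfl | hKne
  · obtain rfl : L = ∅ := (Set.ncard_eq_zero hLfin).1 (by rw [← hcard, Set.ncard_empty])
    exact ⟨∅, ⟨0, .inl (Set.image_empty _).symm⟩, rfl, rfl⟩
  have hLne : L.Nonempty := (Set.ncard_pos hLfin).1 (hcard ▸ (Set.ncard_pos hKfin).2 hKne)
  simp only [suppSet_eq_face, dotZ_neg]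
  rcases faces_eq_of_cov_eq hKfin hLfin hKconv hLconv hKne hLne hcov hu with
    ⟨t, hA, hB⟩ | ⟨t, hA, hB⟩
  · exact ⟨(· + t) '' L, ⟨t, .inl rfl⟩, by rw [face_image_add_const, hA],
      by rw [face_image_add_const, hB]⟩
  · exact ⟨(t - ·) '' L, ⟨t, .inr rfl⟩, by rw [face_image_const_sub, hA],
      by rw [face_image_const_sub, neg_neg, hB]⟩

/-- If `K, L ∈ 𝒦(ℤ²)` have equal covariograms, then for every
`u ∈ ℤ² \ {0}` there is `L' ∈ [L]` with `F(K,u) = F(L',u)` and `F(K,−u) = F(L',−u)`. -/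
theorem edges_up_to_flips
    (K L : Set Z2) (hKfin : K.Finite) (hLfin : L.Finite)
    (hKconv : latticeConvex K) (hLconv : latticeConvex L)
    (hKspan : spans K) (hLspan : spans L)
    (hcov : cov K = cov L) :
    ∀ u : Z2, u ≠ 0 → ∃ L' : Set Z2, sameClass L L' ∧
      suppSet K (toR u) = suppSet L' (toR u) ∧
      suppSet K (toR (-u)) = suppSet L' (toR (-u)) :=
  edges_up_to_flips_general K L hKfin hLfin hKconv hLconv hcov
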